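/- arXiv:1409.3464 — 3 statements merged into one kernel-verified Lean document; each statement's English description precedes it below -/
import Mathlib

section
/- Let V : ℝ^d → ℝ^d be a differentiable vector field and let p, q : ℝ × ℝ^d → ℝ be C² functions. Then for every x ∈ ℝ^d, D_m(⟨∇_x q, ∇_x p⟩)(x) = ⟨∇(D_m p)(x), ∇_x q(0,x)⟩ − ⟨∇_x q(0,x), (DV(x) + DV(x)ᵀ) ∇_x p(0,x)⟩ + ⟨∇_x p(0,x), ∇(D_m q)(x)⟩, where ⟨·,·⟩ is the Euclidean inner product on ℝ^d. -/
/-!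
Write `∇_x f` for the gradient of `f : ℝ × E → ℝ` in its spatial variable. By the symmetry of
the second derivative of `f`, the material derivative commutes with the gradient up to a
transpose term: `∇(D_m f) = D_m(∇_x f) + DVᵀ ∇_x f`. The product rule for `D_m ⟨∇_x q, ∇_x p⟩`
together with this commutation formula for `p` and `q` gives the theorem, because
`⟨∇_x q, DVᵀ ∇_x p⟩ + ⟨DVᵀ ∇_x q, ∇_x p⟩ = ⟨∇_x q, (DV + DVᵀ) ∇_x p⟩`.
-/

open ContinuousLinearMap InnerProductSpace RealInnerProductSpace

noncomputable section

theorem ContDiff.differentiable_fderiv {E F : Type*} [NormedAddCommGroup E] [NormedSpace ℝ E]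
    [NormedAddCommGroup F] [NormedSpace ℝ F] {f : E → F} (hf : ContDiff ℝ 2 f) :
    Differentiable ℝ (fderiv ℝ f) :=
  (hf.fderiv_right (m := 1) (by norm_num)).differentiable one_ne_zero

section MaterialDerivative

variable {E F : Type*} [NormedAddCommGroup E] [NormedSpace ℝ E]
  [NormedAddCommGroup F] [NormedSpace ℝ F]

def materialDeriv (V : E → E) (f : ℝ × E → F) (x : E) : F :=
  deriv (fun t : ℝ => f (t, x + t • V x)) 0

theorem hasDerivAt_perturbation (x v : E) (t : ℝ) :
    HasDerivAt (fun s : ℝ => ((s, x + s • v) : ℝ × E)) (1, v) t := by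
  simpa using (hasDerivAt_id t).prodMk (((hasDerivAt_id t).smul_const v).const_add x)

theorem HasFDerivAt.hasDerivAt_comp_perturbation {f : ℝ × E → F} {f' : ℝ × E →L[ℝ] F}
    {x : E} (hf : HasFDerivAt f f' (0, x)) (v : E) :
    HasDerivAt (fun t : ℝ => f (t, x + t • v)) (f' (1, v)) 0 :=
  hf.comp_hasDerivAt_of_eq 0 (hasDerivAt_perturbation x v 0) (by simp)

theorem materialDeriv_eq_fderiv_apply {f : ℝ × E → F} {V : E → E} {x : E}
    (hf : DifferentiableAt ℝ f (0, x)) :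
    materialDeriv V f x = fderiv ℝ f (0, x) (1, V x) :=
  (hf.hasFDerivAt.hasDerivAt_comp_perturbation (V x)).deriv

theorem hasFDerivAt_materialDeriv {f : ℝ × E → F} {V : E → E} {x : E}
    (hf : ContDiff ℝ 2 f) (hV : DifferentiableAt ℝ V x) :
    HasFDerivAt (materialDeriv V f)
      ((fderiv ℝ (fderiv ℝ f) (0, x) (1, V x)).comp (inr ℝ ℝ E)
        + (fderiv ℝ f (0, x)).comp ((inr ℝ ℝ E).comp (fderiv ℝ V x))) x := by
  have hsymm : IsSymmSndFDerivAt ℝ f (0, x) := hf.contDiffAt.isSymmSndFDerivAt (by simp)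
  have heq : materialDeriv V f = fun z => fderiv ℝ f (0, z) (1, V z) :=
    funext fun z => materialDeriv_eq_fderiv_apply (hf.differentiable (by norm_num) _)
  have hinr : HasFDerivAt (fun z : E => ((0, z) : ℝ × E)) (inr ℝ ℝ E) x :=
    hasFDerivAt_prodMk_right 0 x
  have hslice : HasFDerivAt (fun z => fderiv ℝ f (0, z))
      ((fderiv ℝ (fderiv ℝ f) (0, x)).comp (inr ℝ ℝ E)) x :=
    HasFDerivAt.comp (g := fderiv ℝ f) x (hf.differentiable_fderiv _).hasFDerivAt hinr
  have hD := hslice.clm_apply ((hasFDerivAt_const (1 : ℝ) x).prodMk hV.hasFDerivAt)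
  rw [heq]
  convert hD using 1
  ext h
  simp [hsymm (0, h) (1, V x), add_comm]

theorem materialDeriv_inner {G : Type*} [NormedAddCommGroup G] [InnerProductSpace ℝ G]
    {f g : ℝ × E → G} {V : E → E} {x : E}
    (hf : DifferentiableAt ℝ f (0, x)) (hg : DifferentiableAt ℝ g (0, x)) :
    materialDeriv V (fun w => ⟪f w, g w⟫) x
      = ⟪materialDeriv V f x, g (0, x)⟫ + ⟪f (0, x), materialDeriv V g x⟫ := by
  have hfg := (hf.hasFDerivAt.hasDerivAt_comp_perturbation (V x)).inner ℝ
    (hg.hasFDerivAt.hasDerivAt_comp_perturbation (V x))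
  rw [materialDeriv, hfg.deriv, materialDeriv_eq_fderiv_apply hf, materialDeriv_eq_fderiv_apply hg,
    zero_smul, add_zero, add_comm]

end MaterialDerivative

section PartialGradient

variable {E : Type*} [NormedAddCommGroup E] [InnerProductSpace ℝ E] [CompleteSpace E]

def partialGradient (f : ℝ × E → ℝ) (w : ℝ × E) : E :=
  (toDual ℝ E).symm ((fderiv ℝ f w).comp (inr ℝ ℝ E))

theorem inner_partialGradient (f : ℝ × E → ℝ) (w : ℝ × E) (h : E) :
    ⟪partialGradient f w, h⟫ = fderiv ℝ f w (0, h) :=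
  toDual_symm_apply

theorem gradient_slice_eq_partialGradient {f : ℝ × E → ℝ} {t : ℝ} {z : E}
    (hf : DifferentiableAt ℝ f (t, z)) :
    gradient (fun y => f (t, y)) z = partialGradient f (t, z) := by
  have hinr : HasFDerivAt (fun y : E => ((t, y) : ℝ × E)) (inr ℝ ℝ E) z :=
    hasFDerivAt_prodMk_right t z
  have hslice : HasFDerivAt (fun y => f (t, y)) ((fderiv ℝ f (t, z)).comp (inr ℝ ℝ E)) z :=
    HasFDerivAt.comp (g := f) z hf.hasFDerivAt hinr
  rw [gradient, hslice.fderiv, partialGradient]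

theorem hasFDerivAt_partialGradient {f : ℝ × E → ℝ} {w : ℝ × E}
    (hf : DifferentiableAt ℝ (fderiv ℝ f) w) :
    HasFDerivAt (partialGradient f)
      ((toDual ℝ E).symm.toContinuousLinearEquiv.toContinuousLinearMap.comp
        (((compL ℝ E (ℝ × E) ℝ).flip (inr ℝ ℝ E)).comp (fderiv ℝ (fderiv ℝ f) w))) w :=
  (toDual ℝ E).symm.toContinuousLinearEquiv.toContinuousLinearMap.hasFDerivAt.comp w
    (((compL ℝ E (ℝ × E) ℝ).flip (inr ℝ ℝ E)).hasFDerivAt.comp w hf.hasFDerivAt)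

theorem inner_materialDeriv_partialGradient {f : ℝ × E → ℝ} {V : E → E} {x : E}
    (hf : DifferentiableAt ℝ (fderiv ℝ f) (0, x)) (h : E) :
    ⟪materialDeriv V (partialGradient f) x, h⟫ = fderiv ℝ (fderiv ℝ f) (0, x) (1, V x) (0, h) := by
  rw [materialDeriv_eq_fderiv_apply (hasFDerivAt_partialGradient hf).differentiableAt,
    (hasFDerivAt_partialGradient hf).fderiv]
  exact toDual_symm_apply

theorem gradient_materialDeriv {f : ℝ × E → ℝ} {V : E → E} {x : E}
    (hf : ContDiff ℝ 2 f) (hV : DifferentiableAt ℝ V x) :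
    gradient (materialDeriv V f) x
      = materialDeriv V (partialGradient f) x + adjoint (fderiv ℝ V x) (partialGradient f (0, x)) := by
  refine ext_inner_right ℝ fun h => ?_
  rw [gradient, toDual_symm_apply, (hasFDerivAt_materialDeriv hf hV).fderiv, inner_add_left,
    adjoint_inner_left, inner_partialGradient,
    inner_materialDeriv_partialGradient (hf.differentiable_fderiv _)]
  rfl

end PartialGradient

end

/-- The material derivative of `⟨∇_x q, ∇_x p⟩` with respect to the perturbation
of identity `F_t = id + t V` satisfies
`D_m(⟨∇_x q, ∇_x p⟩)(x) = ⟨∇(D_m p)(x), ∇_x q(0,x)⟩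
  − ⟨∇_x q(0,x), (DV(x) + DV(x)ᵀ) ∇_x p(0,x)⟩ + ⟨∇_x p(0,x), ∇(D_m q)(x)⟩`. -/
theorem material_derivative_of_gradient_inner
    {d : ℕ} (V : EuclideanSpace ℝ (Fin d) → EuclideanSpace ℝ (Fin d))
    (hV : Differentiable ℝ V)
    (p q : ℝ × EuclideanSpace ℝ (Fin d) → ℝ)
    (hp : ContDiff ℝ 2 p) (hq : ContDiff ℝ 2 q)
    (x : EuclideanSpace ℝ (Fin d)) :
    deriv (fun t : ℝ =>
        ⟪gradient (fun z => q (t, z)) (x + t • V x),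
          gradient (fun z => p (t, z)) (x + t • V x)⟫) 0
      = ⟪gradient (fun z => deriv (fun t : ℝ => p (t, z + t • V z)) 0) x,
            gradient (fun z => q (0, z)) x⟫
        - ⟪gradient (fun z => q (0, z)) x,
            (fderiv ℝ V x) (gradient (fun z => p (0, z)) x)
              + (ContinuousLinearMap.adjoint (fderiv ℝ V x))
                  (gradient (fun z => p (0, z)) x)⟫
        + ⟪gradient (fun z => p (0, z)) x,
            gradient (fun z => deriv (fun t : ℝ => q (t, z + t • V z)) 0) x⟫ := by
  have hgp : ∀ t z, gradient (fun y => p (t, y)) z = partialGradient p (t, z) := fun _ _ =>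
    gradient_slice_eq_partialGradient (hp.differentiable (by norm_num) _)
  have hgq : ∀ t z, gradient (fun y => q (t, y)) z = partialGradient q (t, z) := fun _ _ =>
    gradient_slice_eq_partialGradient (hq.differentiable (by norm_num) _)
  simp only [hgp, hgq]
  change materialDeriv V (fun w => ⟪partialGradient q w, partialGradient p w⟫) x
    = ⟪gradient (materialDeriv V p) x, _⟫ - _ + ⟪_, gradient (materialDeriv V q) x⟫
  rw [materialDeriv_inner (hasFDerivAt_partialGradient (hq.differentiable_fderiv _)).differentiableAt
      (hasFDerivAt_partialGradient (hp.differentiable_fderiv _)).differentiableAt,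
    gradient_materialDeriv hp (hV x), gradient_materialDeriv hq (hV x)]
  simp only [inner_add_left, inner_add_right, adjoint_inner_left, adjoint_inner_right,
    real_inner_comm]
  ring
end

section
/- Let Ω ⊂ ℝ^d be a bounded measurable set, let V : ℝ^d → ℝ^d be a C¹ vector field with bounded derivative, and let f : ℝ × ℝ^d → ℝ be a C¹ function with compact support. Then the function t ↦ ∫_{F_t(Ω)} f(t,x) dx, where F_t(Ω) = {x + tV(x) : x ∈ Ω}, has a one-sided (right) derivative at t = 0 equal to ∫_Ω ( D_m f(x) + div V(x) · f(0,x) ) dx, where D_m f(x) = ∂_t f(0,x) + ⟨∇_x f(0,x), V(x)⟩ and div V is the divergence of V. -/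
/-!
Changing variables by `F_t` pulls the integral back to the fixed domain `Ω`, with the Jacobian
`det (1 + t DV)`, which is positive for small `t` since `F_t` is then an injective perturbation of
the identity. The pulled-back integrand `det (1 + t DV(x)) f(t, F_t x)` has a `t`-derivative that
is jointly continuous, so it may be differentiated under the integral over the bounded set `Ω`;
at `t = 0` the derivative of the determinant is the trace, i.e. the divergence of `V`.
-/

open MeasureTheory Metric Function Filter Topology Polynomial Set

theorem Matrix.hasDerivAt_det_one_add_smul {𝕜 n : Type*} [NontriviallyNormedField 𝕜]
    [Fintype n] [DecidableEq n] (M : Matrix n n 𝕜) :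
    HasDerivAt (fun t : 𝕜 => (1 + t • M).det) M.trace 0 := by
  set p := (1 + (X : 𝕜[X]) • M.map C).det.divX.divX
  have hexp : (fun t : 𝕜 => (1 + t • M).det) = fun t => 1 + M.trace * t + p.eval t * t ^ 2 :=
    funext fun t => det_one_add_smul t M
  have hlin : HasDerivAt (fun t => 1 + M.trace * t) M.trace 0 := by
    simpa using ((hasDerivAt_id (0 : 𝕜)).const_mul M.trace).const_add 1
  have hquad : HasDerivAt (fun t => p.eval t * t ^ 2) 0 0 := by
    simpa using (p.hasDerivAt 0).fun_mul (hasDerivAt_pow 2 (0 : 𝕜))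
  rw [hexp]
  simpa using hlin.fun_add hquad

namespace ContinuousLinearMap

section Det

variable {𝕜 E : Type*} [NontriviallyNormedField 𝕜] [CompleteSpace 𝕜] [NormedAddCommGroup E]
  [NormedSpace 𝕜 E] [FiniteDimensional 𝕜 E]

theorem contDiff_det {k : WithTop ℕ∞} : ContDiff 𝕜 k (fun L : E →L[𝕜] E => L.det) := by
  let b := Module.finBasis 𝕜 E
  have hexp : ∀ L : E →L[𝕜] E, L.det = ∑ σ : Equiv.Perm (Fin (Module.finrank 𝕜 E)),
      (Equiv.Perm.sign σ : 𝕜) *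
        ∏ i, LinearMap.toContinuousLinearMap (b.coord (σ i)) (L (b i)) := by
    intro L
    rw [det, ← LinearMap.det_toMatrix b, Matrix.det_apply']
    simp [LinearMap.toMatrix_apply]
  simp_rw [hexp]
  fun_prop

theorem hasDerivAt_det_one_add_smul (L : E →L[𝕜] E) (t : 𝕜) :
    HasDerivAt (fun s : 𝕜 => (1 + s • L).det)
      (fderiv 𝕜 (fun L : E →L[𝕜] E => L.det) (1 + t • L) L) t := by
  have hline : HasDerivAt (fun s : 𝕜 => 1 + s • L) L t := by
    simpa using ((hasDerivAt_id t).smul_const L).const_add 1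
  exact ((contDiff_det (k := 1)).differentiable one_ne_zero _).hasFDerivAt.comp_hasDerivAt t hline

theorem fderiv_det_one (L : E →L[𝕜] E) :
    fderiv 𝕜 (fun L : E →L[𝕜] E => L.det) 1 L = LinearMap.trace 𝕜 E L := by
  let b := Module.finBasis 𝕜 E
  have hmat : (fun t : 𝕜 => (1 + t • L).det) =
      fun t => (1 + t • LinearMap.toMatrix b b L).det := by
    funext t
    rw [det, ← LinearMap.det_toMatrix b]
    simp [LinearMap.toMatrix_one]
  have h := hasDerivAt_det_one_add_smul L 0
  rw [zero_smul, add_zero, hmat] at h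
  rw [h.unique (Matrix.hasDerivAt_det_one_add_smul _), LinearMap.trace_eq_matrix_trace 𝕜 b]

end Det

/-- `1 + s • A` is invertible for `s ∈ [0, 1]`, so its determinant cannot change sign. -/
theorem det_one_add_pos_of_norm_lt_one {E : Type*} [NormedAddCommGroup E] [NormedSpace ℝ E]
    [FiniteDimensional ℝ E] {A : E →L[ℝ] E} (hA : ‖A‖ < 1) : 0 < (1 + A).det := by
  have hne : ∀ s ∈ Icc (0 : ℝ) 1, (1 + s • A).det ≠ 0 := by
    intro s hs
    have hsA : ‖-(s • A)‖ < 1 := by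
      rw [norm_neg]
      calc ‖s • A‖ ≤ ‖s‖ * ‖A‖ := norm_smul_le s A
        _ ≤ 1 * ‖A‖ := by gcongr; rw [Real.norm_of_nonneg hs.1]; exact hs.2
        _ < 1 := by rwa [one_mul]
    have hunit : IsUnit (1 + s • A) := by simpa using (Units.oneSub _ hsA).isUnit
    exact (LinearMap.isUnit_det _ (hunit.map toLinearMapRingHom)).ne_zero
  by_contra! h
  have hcont : ContinuousOn (fun s : ℝ => (1 + s • A).det) (Icc 0 1) :=
    (continuous_det.comp (by fun_prop)).continuousOn
  obtain ⟨s, hs, hs0⟩ :=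
    intermediate_value_Icc' zero_le_one hcont ⟨by simpa using h, by simp [det]⟩
  exact hne s hs hs0

end ContinuousLinearMap

theorem LipschitzWith.injective_add_smul {𝕜 E : Type*} [NormedField 𝕜] [NormedAddCommGroup E]
    [NormedSpace 𝕜 E] {V : E → E} {K : NNReal} (hV : LipschitzWith K V) {t : 𝕜}
    (ht : ‖t‖₊ * K < 1) : Injective (fun z => z + t • V z) :=
  (AntilipschitzWith.id.add_lipschitzWith ((lipschitzWith_smul t).comp hV)
    (by simpa using ht)).injective

theorem integral_image_add_smul {E G : Type*} [NormedAddCommGroup E] [NormedSpace ℝ E]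
    [FiniteDimensional ℝ E] [MeasurableSpace E] [BorelSpace E] (μ : Measure E)
    [μ.IsAddHaarMeasure] [NormedAddCommGroup G] [NormedSpace ℝ G] {Ω : Set E}
    (hΩ : MeasurableSet Ω) {V : E → E} (hVd : Differentiable ℝ V) {K : NNReal}
    (hV : LipschitzWith K V) {t : ℝ} (ht : ‖t‖₊ * K < 1) (g : E → G) :
    ∫ x in (fun z => z + t • V z) '' Ω, g x ∂μ =
      ∫ x in Ω, (1 + t • fderiv ℝ V x).det • g (x + t • V x) ∂μ := by
  have hderiv : ∀ x ∈ Ω,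
      HasFDerivWithinAt (fun z => z + t • V z) (1 + t • fderiv ℝ V x) Ω x := fun x _ =>
    ((hasFDerivAt_id x).add ((hVd x).hasFDerivAt.const_smul t)).hasFDerivWithinAt
  rw [integral_image_eq_integral_abs_det_fderiv_smul μ hΩ hderiv
    (hV.injective_add_smul ht).injOn]
  refine setIntegral_congr_fun hΩ fun x _ => ?_
  have hsmall : ‖t • fderiv ℝ V x‖ < 1 := calc
    ‖t • fderiv ℝ V x‖ ≤ ‖t‖ * K :=
      (norm_smul_le _ _).trans (by gcongr; exact norm_fderiv_le_of_lipschitz ℝ hV)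
    _ < 1 := by exact_mod_cast ht
  rw [abs_of_pos (ContinuousLinearMap.det_one_add_pos_of_norm_lt_one hsmall)]

theorem hasDerivAt_setIntegral_of_continuous {𝕜 X G : Type*} [RCLike 𝕜] [MetricSpace X]
    [ProperSpace X] [MeasurableSpace X] [OpensMeasurableSpace X] {μ : Measure X}
    [IsFiniteMeasureOnCompacts μ] [NormedAddCommGroup G] [NormedSpace ℝ G] [NormedSpace 𝕜 G]
    {s : Set X} (hs : Bornology.IsBounded s) {F F' : 𝕜 → X → G}
    (hF : Continuous (uncurry F)) (hF' : Continuous (uncurry F'))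
    (hderiv : ∀ t x, HasDerivAt (F · x) (F' t x) t) (t₀ : 𝕜) :
    HasDerivAt (fun t => ∫ x in s, F t x ∂μ) (∫ x in s, F' t₀ x ∂μ) t₀ := by
  have hK : IsCompact (closedBall t₀ 1 ×ˢ closure s) :=
    (isCompact_closedBall t₀ 1).prod hs.isCompact_closure
  obtain ⟨B, hB⟩ := hK.exists_bound_of_continuousOn hF'.continuousOn
  have h_bound : ∀ᵐ x ∂μ.restrict s, ∀ t ∈ ball t₀ 1, ‖F' t x‖ ≤ B :=
    ae_restrict_of_ae_restrict_of_subset subset_closure <|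
      (ae_restrict_mem measurableSet_closure).mono fun x hx t ht =>
        hB (t, x) ⟨ball_subset_closedBall ht, hx⟩
  have hF_int : IntegrableOn (F t₀) s μ :=
    ((hF.comp (Continuous.prodMk_right t₀)).continuousOn.integrableOn_compact
      hs.isCompact_closure).mono_set subset_closure
  exact (hasDerivAt_integral_of_dominated_loc_of_deriv_le (ball_mem_nhds t₀ one_pos)
    (.of_forall fun t => (hF.comp (Continuous.prodMk_right t)).aestronglyMeasurable) hF_int
    (hF'.comp (Continuous.prodMk_right t₀)).aestronglyMeasurable h_bound
    (integrableOn_const hs.measure_lt_top.ne) (.of_forall fun x t _ => hderiv t x)).2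

theorem hasDerivAt_setIntegral_det_mul_comp_add_smul {E : Type*} [NormedAddCommGroup E]
    [NormedSpace ℝ E] [FiniteDimensional ℝ E] [MeasurableSpace E] [BorelSpace E]
    {μ : Measure E} [IsFiniteMeasureOnCompacts μ] {Ω : Set E} (hΩ : Bornology.IsBounded Ω)
    {V : E → E} (hV : ContDiff ℝ 1 V) {f : ℝ × E → ℝ} (hf : ContDiff ℝ 1 f) :
    HasDerivAt (fun t => ∫ x in Ω, (1 + t • fderiv ℝ V x).det * f (t, x + t • V x) ∂μ)
      (∫ x in Ω, (deriv (fun t => f (t, x + t • V x)) 0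
        + LinearMap.trace ℝ E (fderiv ℝ V x) * f (0, x)) ∂μ) 0 := by
  have hcurve : ∀ x t, HasDerivAt (fun s : ℝ => f (s, x + s • V x))
      (fderiv ℝ f (t, x + t • V x) (1, V x)) t := fun x t =>
    (hf.differentiable one_ne_zero _).hasFDerivAt.comp_hasDerivAt t
      ((hasDerivAt_id t).prodMk (by simpa using ((hasDerivAt_id t).smul_const (V x)).const_add x))
  have hDV : Continuous (fderiv ℝ V) := hV.continuous_fderiv one_ne_zero
  have hDf : Continuous (fderiv ℝ f) := hf.continuous_fderiv one_ne_zero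
  have hfc : Continuous f := hf.continuous
  have hdet : Continuous fun p : ℝ × E => (1 + p.1 • fderiv ℝ V p.2).det :=
    ContinuousLinearMap.continuous_det.comp (by fun_prop)
  have hdet' : Continuous fun p : ℝ × E => fderiv ℝ (fun L : E →L[ℝ] E => L.det)
      (1 + p.1 • fderiv ℝ V p.2) (fderiv ℝ V p.2) :=
    ((ContinuousLinearMap.contDiff_det.continuous_fderiv one_ne_zero).comp
      (by fun_prop)).clm_apply (by fun_prop)
  have hJ := hasDerivAt_setIntegral_of_continuous hΩ (μ := μ)
    (F := fun t x => (1 + t • fderiv ℝ V x).det * f (t, x + t • V x))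
    (by fun_prop) (by fun_prop)
    (fun t x => (ContinuousLinearMap.hasDerivAt_det_one_add_smul _ t).mul (hcurve x t)) 0
  refine hJ.congr_deriv (integral_congr_ae (.of_forall fun x => ?_))
  simp only [zero_smul, add_zero, ContinuousLinearMap.fderiv_det_one, (hcurve x 0).deriv,
    ContinuousLinearMap.det, ContinuousLinearMap.toLinearMap_one, map_one, one_mul]
  exact add_comm _ _

theorem hasDerivWithinAt_integral_perturbed_domain_general
    {d : ℕ} (Ω : Set (EuclideanSpace ℝ (Fin d)))
    (hΩb : Bornology.IsBounded Ω) (hΩm : MeasurableSet Ω)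
    (V : EuclideanSpace ℝ (Fin d) → EuclideanSpace ℝ (Fin d))
    (hV : ContDiff ℝ 1 V) (hV' : ∃ C, ∀ x, ‖fderiv ℝ V x‖ ≤ C)
    (f : ℝ × EuclideanSpace ℝ (Fin d) → ℝ)
    (hf : ContDiff ℝ 1 f) :
    HasDerivWithinAt
      (fun t : ℝ => ∫ x in (fun z => z + t • V z) '' Ω, f (t, x))
      (∫ x in Ω,
        (deriv (fun t : ℝ => f (t, x + t • V x)) 0
          + (LinearMap.trace ℝ (EuclideanSpace ℝ (Fin d)))
              (fderiv ℝ V x : EuclideanSpace ℝ (Fin d) →ₗ[ℝ] EuclideanSpace ℝ (Fin d))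
            * f (0, x)))
      (Set.Ici (0 : ℝ)) 0 := by
  obtain ⟨C, hC⟩ := hV'
  have hVd : Differentiable ℝ V := hV.differentiable one_ne_zero
  have hVlip : LipschitzWith C.toNNReal V := lipschitzWith_of_nnnorm_fderiv_le hVd fun x =>
    (hC x).trans (Real.le_coe_toNNReal C)
  have hsmall : ∀ᶠ t : ℝ in 𝓝 0, ‖t‖₊ * C.toNNReal < 1 :=
    Tendsto.eventually_lt_const (v := ‖(0 : ℝ)‖₊ * C.toNNReal) (by simp)
      ((by fun_prop : Continuous fun t : ℝ => ‖t‖₊ * C.toNNReal).tendsto 0)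
  have hpullback : (fun t : ℝ => ∫ x in (fun z => z + t • V z) '' Ω, f (t, x)) =ᶠ[𝓝 0]
      fun t => ∫ x in Ω, (1 + t • fderiv ℝ V x).det * f (t, x + t • V x) := by
    filter_upwards [hsmall] with t ht
    exact integral_image_add_smul volume hΩm hVd hVlip ht _
  exact (hpullback.hasDerivAt_iff.2
    (hasDerivAt_setIntegral_det_mul_comp_add_smul hΩb hV hf)).hasDerivWithinAt

/-- Rule for differentiating domain integrals: the function
`t ↦ ∫_{F_t(Ω)} f(t,x) dx`, with `F_t(x) = x + t V(x)`, has the one-sided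
(right) derivative `∫_Ω (D_m f + div(V) f) dx` at `t = 0`. -/
theorem hasDerivWithinAt_integral_perturbed_domain
    {d : ℕ} (Ω : Set (EuclideanSpace ℝ (Fin d)))
    (hΩb : Bornology.IsBounded Ω) (hΩm : MeasurableSet Ω)
    (V : EuclideanSpace ℝ (Fin d) → EuclideanSpace ℝ (Fin d))
    (hV : ContDiff ℝ 1 V) (hV' : ∃ C, ∀ x, ‖fderiv ℝ V x‖ ≤ C)
    (f : ℝ × EuclideanSpace ℝ (Fin d) → ℝ)
    (hf : ContDiff ℝ 1 f) (hfc : HasCompactSupport f) :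
    HasDerivWithinAt
      (fun t : ℝ => ∫ x in (fun z => z + t • V z) '' Ω, f (t, x))
      (∫ x in Ω,
        (deriv (fun t : ℝ => f (t, x + t • V x)) 0
          + (LinearMap.trace ℝ (EuclideanSpace ℝ (Fin d)))
              (fderiv ℝ V x : EuclideanSpace ℝ (Fin d) →ₗ[ℝ] EuclideanSpace ℝ (Fin d))
            * f (0, x)))
      (Set.Ici (0 : ℝ)) 0 :=
  hasDerivWithinAt_integral_perturbed_domain_general Ω hΩb hΩm V hV hV' f hf
end

section
/- Let n ∈ ℝ^d be a unit vector, k₁, k₂ ∈ ℝ, and g₁, g₂, h₁, h₂ ∈ ℝ^d. Assume the tangential continuity conditions g₁ − ⟨g₁,n⟩n = g₂ − ⟨g₂,n⟩n and h₁ − ⟨h₁,n⟩n = h₂ − ⟨h₂,n⟩n, and the flux continuity conditions k₁⟨g₁,n⟩ = k₂⟨g₂,n⟩ and k₁⟨h₁,n⟩ = k₂⟨h₂,n⟩. Then (−2 k₁ ⟨g₁,n⟩⟨h₁,n⟩ + k₁ ⟨g₁,h₁⟩) − (−2 k₂ ⟨g₂,n⟩⟨h₂,n⟩ + k₂ ⟨g₂,h₂⟩)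 = (k₁ − k₂) ⟨g₁, h₂⟩. -/
open RealInnerProductSpace

/-- Interface jump identity: under tangential continuity of the gradients and
continuity of the fluxes across the interface, the jump
`⟦−2k ∂y/∂n ∂p/∂n + k ∇yᵀ∇p⟧` equals `⟦k⟧ ∇y₁ᵀ∇p₂`. -/
theorem interface_jump_identity
    {d : ℕ} (n : EuclideanSpace ℝ (Fin d)) (hn : ‖n‖ = 1)
    (k₁ k₂ : ℝ) (g₁ g₂ h₁ h₂ : EuclideanSpace ℝ (Fin d))
    (hg : g₁ - ⟪g₁, n⟫ • n = g₂ - ⟪g₂, n⟫ • n)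
    (hh : h₁ - ⟪h₁, n⟫ • n = h₂ - ⟪h₂, n⟫ • n)
    (hgf : k₁ * ⟪g₁, n⟫ = k₂ * ⟪g₂, n⟫)
    (hhf : k₁ * ⟪h₁, n⟫ = k₂ * ⟪h₂, n⟫) :
    (-2 * k₁ * ⟪g₁, n⟫ * ⟪h₁, n⟫ + k₁ * ⟪g₁, h₁⟫)
      - (-2 * k₂ * ⟪g₂, n⟫ * ⟪h₂, n⟫ + k₂ * ⟪g₂, h₂⟫)
    = (k₁ - k₂) * ⟪g₁, h₂⟫ := by
  have hnn : ⟪n, n⟫ = (1 : ℝ) := by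
    rw [real_inner_self_eq_norm_mul_norm, hn]; ring
  have expand : ∀ g h : EuclideanSpace ℝ (Fin d),
      ⟪g - ⟪g, n⟫ • n, h - ⟪h, n⟫ • n⟫ = ⟪g, h⟫ - ⟪g, n⟫ * ⟪h, n⟫ := by
    intro g h
    simp only [inner_sub_left, inner_sub_right, real_inner_smul_left,
      real_inner_smul_right, hnn, real_inner_comm n]
    ring
  have E1 : ⟪g₁, h₁⟫ - ⟪g₁, n⟫ * ⟪h₁, n⟫ = ⟪g₂, h₂⟫ - ⟪g₂, n⟫ * ⟪h₂, n⟫ := by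
    rw [← expand, ← expand, hg, hh]
  have E2 : ⟪g₁, h₂⟫ - ⟪g₁, n⟫ * ⟪h₂, n⟫ = ⟪g₂, h₂⟫ - ⟪g₂, n⟫ * ⟪h₂, n⟫ := by
    rw [← expand, ← expand, hg]
  linear_combination k₁ * E1 - (k₁ - k₂) * E2 - ⟪g₁, n⟫ * hhf - ⟪h₂, n⟫ * hgf
end
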